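/- arXiv:1906.09784 — 2 statements merged into one kernel-verified Lean document; each statement's English description precedes it below -/
import Mathlib

section
/- The shift identity: if v_{k-1} ∈ ℝ^S, π_k a policy, and s_k = T_{π_k}^m v_{k-1} - v_{π_k}, b_{k-1} = v_{k-1} - T_{π_k} v_{k-1}, then s_k = (γ P_{π_k})^m (I - γ P_{π_k})^{-1} b_{k-1}. -/
open Finset

/-- A (stochastic) policy: for each state, a probability distribution over actions. -/
def IsPolicy {S A : Type*} [Fintype A] (π : S → A → ℝ) : Prop :=
  (∀ s a, 0 ≤ π s a) ∧ ∀ s, ∑ a, π s a = 1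

/-- A Markov transition kernel: for each state-action pair, a distribution over next states. -/
def IsKernel {S A : Type*} [Fintype S] (P : S → A → S → ℝ) : Prop :=
  (∀ s a s', 0 ≤ P s a s') ∧ ∀ s a, ∑ s', P s a s' = 1

/-- One-step state-action evaluation: q(s,a) = r(s,a) + γ E_{s'}[v(s')]. -/
noncomputable def qOf {S A : Type*} [Fintype S] (r : S → A → ℝ) (P : S → A → S → ℝ)
    (γ : ℝ) (v : S → ℝ) (s : S) (a : A) : ℝ :=
  r s a + γ * ∑ s', P s a s' * v s'

/-- Bellman evaluation operator T_π. -/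
noncomputable def Tpol {S A : Type*} [Fintype S] [Fintype A] (r : S → A → ℝ)
    (P : S → A → S → ℝ) (γ : ℝ) (π : S → A → ℝ) (v : S → ℝ) (s : S) : ℝ :=
  ∑ a, π s a * qOf r P γ v s a

/-- Bellman optimality operator T_*. -/
noncomputable def Tstar {S A : Type*} [Fintype S] [Fintype A] [Nonempty A]
    (r : S → A → ℝ) (P : S → A → S → ℝ) (γ : ℝ) (v : S → ℝ) (s : S) : ℝ :=
  Finset.univ.sup' Finset.univ_nonempty (fun a => qOf r P γ v s a)

/-- Transition matrix P_π of a policy. -/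
noncomputable def Ppol {S A : Type*} [Fintype A] (P : S → A → S → ℝ)
    (π : S → A → ℝ) : Matrix S S ℝ :=
  fun s s' => ∑ a, π s a * P s a s'

/-- Expected reward r_π of a policy. -/
noncomputable def rpol {S A : Type*} [Fintype A] (r : S → A → ℝ)
    (π : S → A → ℝ) (s : S) : ℝ :=
  ∑ a, π s a * r s a

lemma Tpol_sub {S A : Type*} [Fintype S] [Fintype A] (r : S → A → ℝ)
    (P : S → A → S → ℝ) (γ : ℝ) (π : S → A → ℝ) (v w : S → ℝ) :
    Tpol r P γ π v - Tpol r P γ π w = (γ • Ppol P π).mulVec (v - w) := by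
  funext s
  simp only [Pi.sub_apply, Tpol, qOf, Matrix.mulVec, Matrix.smul_apply, Ppol,
    dotProduct, smul_eq_mul]
  rw [← Finset.sum_sub_distrib]
  trans ∑ a, ∑ s', γ * π s a * P s a s' * (v s' - w s')
  · refine Finset.sum_congr rfl fun a _ => ?_
    simp only [mul_add, Finset.mul_sum, ← Finset.sum_sub_distrib]
    rw [add_sub_add_left_eq_sub, ← Finset.sum_sub_distrib]
    exact Finset.sum_congr rfl fun s' _ => by ring
  · rw [Finset.sum_comm]
    refine Finset.sum_congr rfl fun s' _ => ?_
    simp only [Finset.sum_mul, Finset.mul_sum, Pi.sub_apply]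
    exact Finset.sum_congr rfl fun a _ => by ring

lemma Ppol_nonneg {S A : Type*} [Fintype S] [Fintype A] (P : S → A → S → ℝ)
    (hP : ∀ s a s', 0 ≤ P s a s') (π : S → A → ℝ) (hπ : ∀ s a, 0 ≤ π s a)
    (s s' : S) : 0 ≤ Ppol P π s s' :=
  Finset.sum_nonneg fun a _ => mul_nonneg (hπ s a) (hP s a s')

lemma Ppol_row_sum {S A : Type*} [Fintype S] [Fintype A] (P : S → A → S → ℝ)
    (hP : ∀ s a, ∑ s', P s a s' = 1) (π : S → A → ℝ) (hπ : ∀ s, ∑ a, π s a = 1)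
    (s : S) : ∑ s', Ppol P π s s' = 1 := by
  unfold Ppol
  rw [Finset.sum_comm]
  simp only [← Finset.mul_sum, hP]
  simpa using hπ s

lemma det_one_sub_ne_zero {S : Type*} [Fintype S] [DecidableEq S]
    (Q : Matrix S S ℝ) (hQ : ∀ s s', 0 ≤ Q s s') (γ : ℝ) (hγ0 : 0 < γ) (hγ1 : γ < 1)
    (hrow : ∀ s, ∑ s', Q s s' = 1) : IsUnit (1 - γ • Q).det := by
  rw [isUnit_iff_ne_zero]
  intro hdet
  obtain ⟨x, hx0, hx⟩ := (Matrix.exists_mulVec_eq_zero_iff).2 hdet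
  obtain ⟨s1, hs1⟩ := Function.ne_iff.1 hx0
  obtain ⟨s0, -, hs0⟩ := Finset.exists_max_image Finset.univ (fun s => |x s|)
    ⟨s1, Finset.mem_univ s1⟩
  have hpos : 0 < |x s0| := lt_of_lt_of_le (abs_pos.2 hs1) (hs0 s1 (Finset.mem_univ s1))
  rw [Matrix.sub_mulVec, Matrix.one_mulVec, Matrix.smul_mulVec, sub_eq_zero] at hx
  have hxe : x s0 = γ * ∑ s', Q s0 s' * x s' := by
    have := congrFun hx s0
    simpa [Matrix.mulVec, dotProduct] using this
  have hle : |x s0| ≤ γ * |x s0| := by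
    calc |x s0| = γ * |∑ s', Q s0 s' * x s'| := by
          rw [hxe, abs_mul, abs_of_pos hγ0]
      _ ≤ γ * ∑ s', |Q s0 s' * x s'| :=
          mul_le_mul_of_nonneg_left (Finset.abs_sum_le_sum_abs _ _) hγ0.le
      _ ≤ γ * ∑ s', Q s0 s' * |x s0| := by
          refine mul_le_mul_of_nonneg_left (Finset.sum_le_sum fun s' _ => ?_) hγ0.le
          rw [abs_mul, abs_of_nonneg (hQ s0 s')]
          exact mul_le_mul_of_nonneg_left (hs0 s' (Finset.mem_univ s')) (hQ s0 s')
      _ = γ * |x s0| := by rw [← Finset.sum_mul, hrow s0, one_mul]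
  nlinarith

theorem shift_identity {S A : Type*} [Fintype S] [Fintype A] [DecidableEq S]
    (r : S → A → ℝ) (P : S → A → S → ℝ) (hP : IsKernel P)
    (π : S → A → ℝ) (hπ : IsPolicy π) (γ : ℝ) (hγ : γ ∈ Set.Ioo (0:ℝ) 1)
    (m : ℕ) (vprev vπ : S → ℝ) (hfix : Tpol r P γ π vπ = vπ) :
    (Tpol r P γ π)^[m] vprev - vπ =
      ((γ • Ppol P π) ^ m).mulVec
        ((1 - γ • Ppol P π)⁻¹.mulVec (vprev - Tpol r P γ π vprev)) := by
  obtain ⟨hγ0, hγ1⟩ := hγ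
  set Q : Matrix S S ℝ := γ • Ppol P π with hQdef
  have hstep : ∀ v : S → ℝ, Tpol r P γ π v - vπ = Q.mulVec (v - vπ) := fun v => by
    conv_lhs => rw [← hfix]
    exact Tpol_sub r P γ π v vπ
  have hiter : ∀ (n : ℕ) (v : S → ℝ),
      (Tpol r P γ π)^[n] v - vπ = (Q ^ n).mulVec (v - vπ) := by
    intro n
    induction n with
    | zero => intro v; simp [Matrix.one_mulVec]
    | succ n ih =>
      intro v
      rw [Function.iterate_succ_apply, ih, hstep, Matrix.mulVec_mulVec, ← pow_succ]
  have hB : (1 - Q).mulVec (vprev - vπ) = vprev - Tpol r P γ π vprev := by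
    rw [Matrix.sub_mulVec, Matrix.one_mulVec, ← hstep vprev]
    abel
  have hunit : IsUnit (1 - Q).det :=
    det_one_sub_ne_zero (Ppol P π) (Ppol_nonneg P hP.1 π hπ.1) γ hγ0 hγ1
      (Ppol_row_sum P hP.2 π hπ.2)
  have hinv : (1 - Q)⁻¹.mulVec (vprev - Tpol r P γ π vprev) = vprev - vπ := by
    rw [← hB, Matrix.mulVec_mulVec, Matrix.nonsing_inv_mul _ hunit, Matrix.one_mulVec]
  rw [hinv, hiter]
end

section
/- Exact-case convergence of conservative MPI: in the error-free conservative scheme with constant mixture rate α ∈ (0,1], the losses satisfy ‖v_* - v_{π_k}‖_∞ ≤ C · (1 - α(1-γ))^k for some constant C depending only on the initial condition, γ, and R. -/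
open Finset

/-!
Shifting the value iterates by `γ ^ (m k) c` for a suitable `c ≤ 0` produces another run of the
scheme with the same policies, one in which every `v k` is a sub-solution of `T_{π k}`. Then the
iterates of `T_{π (k+1)}` started at `v k` increase, so `v (k + 1) ≥ T_{π (k+1)} v k`, which is the
mixture `(1 - α) T_{π k} v k + α T_* v k`. Since also `v k ≤ v_{π k} ≤ v_*`, the gap `v_* - v k`
is nonnegative and contracts in sup-norm by `(1 - α) + α γ`, and it dominates the loss of `π k`.
-/

section Comparison

variable {S : Type*} {γ : ℝ} {f : (S → ℝ) → S → ℝ}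

lemma iterate_add_const (hf : ∀ u c, f (fun s => u s + c) = fun s => f u s + γ * c)
    (n : ℕ) (u : S → ℝ) (c : ℝ) :
    f^[n] (fun s => u s + c) = fun s => f^[n] u s + γ ^ n * c := by
  induction n with
  | zero => simp
  | succ n ih =>
    funext s
    rw [Function.iterate_succ_apply', ih, hf, Function.iterate_succ_apply', pow_succ]
    ring

variable [Fintype S]

lemma apply_sub_apply_le_norm_sub (u w : S → ℝ) (s : S) : u s - w s ≤ ‖u - w‖ :=
  (le_abs_self _).trans (norm_le_pi_norm (u - w) s)

lemma norm_sub_le_norm_sub_of_le_of_le {u w z : S → ℝ} (huw : u ≤ w) (hwz : w ≤ z) :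
    ‖z - w‖ ≤ ‖z - u‖ :=
  (pi_norm_le_iff_of_nonneg (norm_nonneg _)).2 fun s => by
    rw [Pi.sub_apply, Real.norm_of_nonneg (sub_nonneg.2 (hwz s))]
    exact (sub_le_sub_left (huw s) _).trans (apply_sub_apply_le_norm_sub z u s)

lemma le_of_le_map_of_map_le (hf : Monotone f)
    (hf_add : ∀ u c, f (fun s => u s + c) = fun s => f u s + γ * c) (hγ0 : 0 ≤ γ) (hγ1 : γ < 1)
    {x y : S → ℝ} (hx : x ≤ f x) (hy : f y ≤ y) : x ≤ y := by
  set e : S → ℝ := fun s => max (x s - y s) 0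
  have he_nonneg : ∀ s, 0 ≤ e s := fun s => le_max_right _ _
  have hxy : x ≤ fun s => y s + ‖e‖ := fun s => by
    have := (le_max_left (x s - y s) 0).trans ((le_abs_self (e s)).trans (norm_le_pi_norm e s))
    linarith
  have hxy' : ∀ s, x s - y s ≤ γ * ‖e‖ := fun s => by
    have := (hx s).trans (hf hxy s)
    rw [hf_add] at this
    linarith [hy s]
  have he : ‖e‖ ≤ γ * ‖e‖ := (pi_norm_le_iff_of_nonneg (by positivity)).2 fun s => by
    rw [Real.norm_of_nonneg (he_nonneg s)]
    exact max_le (hxy' s) (by positivity)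
  have he0 : ‖e‖ = 0 := by nlinarith [norm_nonneg e]
  intro s
  simpa [he0] using hxy s

end Comparison

section Bellman

variable {S A : Type*} [Fintype S] {r : S → A → ℝ} {P : S → A → S → ℝ} {γ : ℝ}

lemma qOf_add_const (hP : IsKernel P) (u : S → ℝ) (c : ℝ) (s : S) (a : A) :
    qOf r P γ (fun x => u x + c) s a = qOf r P γ u s a + γ * c := by
  simp only [qOf, mul_add, sum_add_distrib, ← sum_mul, hP.2 s a]
  ring

lemma qOf_mono (hP : IsKernel P) (hγ : 0 ≤ γ) {u w : S → ℝ} (h : u ≤ w) (s : S) (a : A) :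
    qOf r P γ u s a ≤ qOf r P γ w s a := by
  unfold qOf
  gcongr with s' _
  · exact hP.1 s a s'
  · exact h s'

variable [Fintype A]

lemma Tpol_add_const (hP : IsKernel P) {π : S → A → ℝ} (hπ : IsPolicy π) (u : S → ℝ) (c : ℝ) :
    Tpol r P γ π (fun x => u x + c) = fun s => Tpol r P γ π u s + γ * c := by
  funext s
  simp only [Tpol, qOf_add_const hP, mul_add, sum_add_distrib, ← sum_mul, hπ.2 s, one_mul]

lemma Tpol_mono (hP : IsKernel P) (hγ : 0 ≤ γ) {π : S → A → ℝ} (hπ : IsPolicy π) :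
    Monotone (Tpol r P γ π) := fun u w h s => by
  unfold Tpol
  gcongr with a _
  · exact hπ.1 s a
  · exact qOf_mono hP hγ h s a

lemma Tpol_mix_apply (α : ℝ) (π₁ π₂ : S → A → ℝ) (u : S → ℝ) (s : S) :
    Tpol r P γ (fun s a => (1 - α) * π₁ s a + α * π₂ s a) u s
      = (1 - α) * Tpol r P γ π₁ u s + α * Tpol r P γ π₂ u s := by
  simp only [Tpol, add_mul, sum_add_distrib, mul_sum, mul_assoc]

lemma le_of_le_Tpol_of_Tpol_le (hP : IsKernel P) (hγ0 : 0 ≤ γ) (hγ1 : γ < 1)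
    {π : S → A → ℝ} (hπ : IsPolicy π) {x y : S → ℝ} (hx : x ≤ Tpol r P γ π x)
    (hy : Tpol r P γ π y ≤ y) : x ≤ y :=
  le_of_le_map_of_map_le (Tpol_mono hP hγ0 hπ) (Tpol_add_const hP hπ) hγ0 hγ1 hx hy

variable [Nonempty A]

lemma Tstar_add_const (hP : IsKernel P) (u : S → ℝ) (c : ℝ) :
    Tstar r P γ (fun x => u x + c) = fun s => Tstar r P γ u s + γ * c := by
  funext s
  simp only [Tstar, qOf_add_const hP]
  exact (sup'_add univ _ _ univ_nonempty).symm

lemma Tstar_mono (hP : IsKernel P) (hγ : 0 ≤ γ) : Monotone (Tstar r P γ) := fun _ w h s =>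
  sup'_le _ _ fun a _ => (qOf_mono hP hγ h s a).trans (le_sup' (qOf r P γ w s) (mem_univ a))

lemma Tpol_le_Tstar {π : S → A → ℝ} (hπ : IsPolicy π) (u : S → ℝ) :
    Tpol r P γ π u ≤ Tstar r P γ u := fun s =>
  calc Tpol r P γ π u s ≤ ∑ a, π s a * Tstar r P γ u s :=
        sum_le_sum fun a _ => mul_le_mul_of_nonneg_left (le_sup' (qOf r P γ u s) (mem_univ a))
          (hπ.1 s a)
    _ = Tstar r P γ u s := by rw [← sum_mul, hπ.2 s, one_mul]

end Bellman

structure IsConservativeMPI {S A : Type*} [Fintype S] [Fintype A] [Nonempty A]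
    (r : S → A → ℝ) (P : S → A → S → ℝ) (γ : ℝ) (m : ℕ) (α : ℝ)
    (π π' : ℕ → S → A → ℝ) (v : ℕ → S → ℝ) : Prop where
  policy : ∀ k, IsPolicy (π k)
  greedy_policy : ∀ k, IsPolicy (π' k)
  iterate : ∀ k, v (k + 1) = (Tpol r P γ (π (k + 1)))^[m] (v k)
  greedy : ∀ k s, Tpol r P γ (π' (k + 1)) (v k) s = Tstar r P γ (v k) s
  mix : ∀ k, π (k + 1) = fun s a => (1 - α) * π k s a + α * π' (k + 1) s a

namespace IsConservativeMPI

variable {S A : Type*} [Fintype S] [Fintype A] [Nonempty A] {r : S → A → ℝ}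
  {P : S → A → S → ℝ} {γ : ℝ} {m : ℕ} {α : ℝ} {π π' : ℕ → S → A → ℝ} {v : ℕ → S → ℝ}

lemma add_geom_const (h : IsConservativeMPI r P γ m α π π' v) (hP : IsKernel P) (c : ℝ) :
    IsConservativeMPI r P γ m α π π' fun k s => v k s + γ ^ (m * k) * c where
  policy := h.policy
  greedy_policy := h.greedy_policy
  iterate k := by
    rw [iterate_add_const (Tpol_add_const hP (h.policy _)), ← h.iterate k]
    funext s
    ring
  greedy k s := by
    rw [Tpol_add_const hP (h.greedy_policy _), Tstar_add_const hP]
    exact congrArg (· + _) (h.greedy k s)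
  mix := h.mix

lemma Tpol_succ_apply (h : IsConservativeMPI r P γ m α π π' v) (k : ℕ) (s : S) :
    Tpol r P γ (π (k + 1)) (v k) s
      = (1 - α) * Tpol r P γ (π k) (v k) s + α * Tstar r P γ (v k) s := by
  rw [h.mix k, Tpol_mix_apply, h.greedy k s]

lemma Tpol_le_Tpol_succ (h : IsConservativeMPI r P γ m α π π' v) (hα : 0 ≤ α) (k : ℕ) :
    Tpol r P γ (π k) (v k) ≤ Tpol r P γ (π (k + 1)) (v k) := fun s => by
  have := Tpol_le_Tstar (r := r) (P := P) (γ := γ) (h.policy k) (v k) s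
  rw [h.Tpol_succ_apply]
  nlinarith

lemma monotone_iterate (h : IsConservativeMPI r P γ m α π π' v) (hP : IsKernel P) (hγ : 0 ≤ γ)
    (hα : 0 ≤ α) {k : ℕ} (hk : v k ≤ Tpol r P γ (π k) (v k)) :
    Monotone fun n => (Tpol r P γ (π (k + 1)))^[n] (v k) :=
  (Tpol_mono hP hγ (h.policy _)).monotone_iterate_of_le_map (hk.trans (h.Tpol_le_Tpol_succ hα k))

lemma le_Tpol (h : IsConservativeMPI r P γ m α π π' v) (hP : IsKernel P) (hγ : 0 ≤ γ)
    (hα : 0 ≤ α) (h₀ : v 0 ≤ Tpol r P γ (π 0) (v 0)) : ∀ k, v k ≤ Tpol r P γ (π k) (v k)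
  | 0 => h₀
  | k + 1 => by
    have := h.monotone_iterate hP hγ hα (h.le_Tpol hP hγ hα h₀ k) m.le_succ
    simpa only [Function.iterate_succ_apply', ← h.iterate k] using this

lemma norm_sub_succ_le (h : IsConservativeMPI r P γ m α π π' v) (hP : IsKernel P)
    (hγ : 0 ≤ γ) (hα : α ∈ Set.Icc (0 : ℝ) 1) (hm : 1 ≤ m) {vstar : S → ℝ}
    (hstar : ∀ s, Tstar r P γ vstar s = vstar s) {k : ℕ} (hk : v k ≤ Tpol r P γ (π k) (v k))
    (hle : v (k + 1) ≤ vstar) :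
    ‖vstar - v (k + 1)‖ ≤ (1 - α * (1 - γ)) * ‖vstar - v k‖ := by
  set D := ‖vstar - v k‖
  have hD : ∀ s, vstar s - v k s ≤ D := apply_sub_apply_le_norm_sub vstar (v k)
  have hstep : Tpol r P γ (π (k + 1)) (v k) ≤ v (k + 1) := by
    simpa only [Function.iterate_one, ← h.iterate k] using h.monotone_iterate hP hγ hα.1 hk hm
  have hTstar : ∀ s, Tstar r P γ vstar s ≤ Tstar r P γ (v k) s + γ * D := fun s => by
    have := Tstar_mono (r := r) hP hγ (fun s => by linarith [hD s] : vstar ≤ fun s => v k s + D) s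
    rwa [Tstar_add_const hP] at this
  have hα' : 0 ≤ 1 - α := sub_nonneg.2 hα.2
  refine (pi_norm_le_iff_of_nonneg (mul_nonneg (by nlinarith [hα.1]) (norm_nonneg _))).2
    fun s => ?_
  rw [Pi.sub_apply, Real.norm_of_nonneg (sub_nonneg.2 (hle s))]
  calc vstar s - v (k + 1) s ≤ vstar s - Tpol r P γ (π (k + 1)) (v k) s := by linarith [hstep s]
    _ = (1 - α) * (vstar s - Tpol r P γ (π k) (v k) s)
          + α * (Tstar r P γ vstar s - Tstar r P γ (v k) s) := by
      rw [h.Tpol_succ_apply, hstar]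
      ring
    _ ≤ (1 - α) * D + α * (γ * D) := by
      gcongr
      · linarith [hk s, hD s]
      · exact hα.1
      · linarith [hTstar s]
    _ = (1 - α * (1 - γ)) * D := by ring

lemma norm_sub_value_le (h : IsConservativeMPI r P γ m α π π' v) (hP : IsKernel P)
    (hγ : γ ∈ Set.Ioo (0 : ℝ) 1) (hα : α ∈ Set.Icc (0 : ℝ) 1) (hm : 1 ≤ m) {vπ : ℕ → S → ℝ}
    (hvπ : ∀ k, Tpol r P γ (π k) (vπ k) = vπ k) {vstar : S → ℝ}
    (hstar : ∀ s, Tstar r P γ vstar s = vstar s) (h₀ : v 0 ≤ Tpol r P γ (π 0) (v 0)) (k : ℕ) :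
    ‖vstar - vπ k‖ ≤ ‖vstar - v 0‖ * (1 - α * (1 - γ)) ^ k := by
  have hsub := h.le_Tpol hP hγ.1.le hα.1 h₀
  have hvπ_le : ∀ k, vπ k ≤ vstar := fun k =>
    le_of_le_Tpol_of_Tpol_le hP hγ.1.le hγ.2 (h.policy k) (hvπ k).ge
      fun s => (Tpol_le_Tstar (h.policy k) vstar s).trans (hstar s).le
  have hv_le : ∀ k, v k ≤ vπ k := fun k =>
    le_of_le_Tpol_of_Tpol_le hP hγ.1.le hγ.2 (h.policy k) (hsub k) (hvπ k).le
  calc ‖vstar - vπ k‖ ≤ ‖vstar - v k‖ := norm_sub_le_norm_sub_of_le_of_le (hv_le k) (hvπ_le k)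
    _ ≤ (1 - α * (1 - γ)) ^ k * ‖vstar - v 0‖ :=
      le_geom (u := fun j => ‖vstar - v j‖) (by nlinarith [mul_nonneg hα.1 hγ.1.le, hα.2]) k
        fun j _ => h.norm_sub_succ_le hP hγ.1.le hα hm hstar (hsub j) ((hv_le _).trans (hvπ_le _))
    _ = ‖vstar - v 0‖ * (1 - α * (1 - γ)) ^ k := mul_comm _ _

end IsConservativeMPI

theorem conservative_mpi_linear_convergence_general {S A : Type*} [Fintype S] [Fintype A]
    [Nonempty A]
    (r : S → A → ℝ) (P : S → A → S → ℝ) (hP : IsKernel P)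
    (γ : ℝ) (hγ : γ ∈ Set.Ioo (0:ℝ) 1)
    (m : ℕ) (hm : 1 ≤ m) (α : ℝ) (hα : α ∈ Set.Ioc (0:ℝ) 1)
    (π π' : ℕ → S → A → ℝ) (hπ : ∀ k, IsPolicy (π k)) (hπ' : ∀ k, IsPolicy (π' k))
    (v : ℕ → S → ℝ)
    (hrec : ∀ k, v (k + 1) = (Tpol r P γ (π (k + 1)))^[m] (v k))
    (hgreedy : ∀ k s, Tpol r P γ (π' (k + 1)) (v k) s = Tstar r P γ (v k) s)
    (hmix : ∀ k, π (k + 1) = fun s a => (1 - α) * π k s a + α * π' (k + 1) s a)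
    (vπ : ℕ → S → ℝ) (hvπ : ∀ k, Tpol r P γ (π k) (vπ k) = vπ k)
    (vstar : S → ℝ) (hstar : ∀ s, Tstar r P γ vstar s = vstar s) :
    ∃ C : ℝ, ∀ k, ‖vstar - vπ k‖ ≤ C * (1 - α * (1 - γ)) ^ k := by
  have hrun : IsConservativeMPI r P γ m α π π' v := ⟨hπ, hπ', hrec, hgreedy, hmix⟩
  set c := -(‖v 0 - Tpol r P γ (π 0) (v 0)‖ / (1 - γ))
  have hc : (1 - γ) * c = -‖v 0 - Tpol r P γ (π 0) (v 0)‖ := by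
    rw [mul_neg, mul_div_cancel₀ _ (sub_pos.2 hγ.2).ne']
  have h₀ : (fun s => v 0 s + γ ^ (m * 0) * c)
      ≤ Tpol r P γ (π 0) (fun s => v 0 s + γ ^ (m * 0) * c) := fun s => by
    rw [Tpol_add_const hP (hπ 0)]
    simp only [mul_zero, pow_zero, one_mul]
    linarith [apply_sub_apply_le_norm_sub (v 0) (Tpol r P γ (π 0) (v 0)) s]
  exact ⟨_, (hrun.add_geom_const hP c).norm_sub_value_le hP hγ ⟨hα.1.le, hα.2⟩ hm hvπ hstar h₀⟩

theorem conservative_mpi_linear_convergence {S A : Type*} [Fintype S] [Fintype A]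
    [Nonempty S] [Nonempty A]
    (r : S → A → ℝ) (P : S → A → S → ℝ) (hP : IsKernel P)
    (γ : ℝ) (hγ : γ ∈ Set.Ioo (0:ℝ) 1)
    (R : ℝ) (hr : ∀ s a, |r s a| ≤ R)
    (m : ℕ) (hm : 1 ≤ m) (α : ℝ) (hα : α ∈ Set.Ioc (0:ℝ) 1)
    (π π' : ℕ → S → A → ℝ) (hπ : ∀ k, IsPolicy (π k)) (hπ' : ∀ k, IsPolicy (π' k))
    (v : ℕ → S → ℝ)
    (hrec : ∀ k, v (k + 1) = (Tpol r P γ (π (k + 1)))^[m] (v k))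
    (hgreedy : ∀ k s, Tpol r P γ (π' (k + 1)) (v k) s = Tstar r P γ (v k) s)
    (hmix : ∀ k, π (k + 1) = fun s a => (1 - α) * π k s a + α * π' (k + 1) s a)
    (vπ : ℕ → S → ℝ) (hvπ : ∀ k, Tpol r P γ (π k) (vπ k) = vπ k)
    (vstar : S → ℝ) (hstar : ∀ s, Tstar r P γ vstar s = vstar s) :
    ∃ C : ℝ, ∀ k, ‖vstar - vπ k‖ ≤ C * (1 - α * (1 - γ)) ^ k :=
  conservative_mpi_linear_convergence_general r P hP γ hγ m hm α hα π π' hπ hπ' v hrec hgreedy hmix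
    vπ hvπ vstar hstar
end
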